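/- arXiv:1204.3358 — 6 statements merged into one kernel-verified Lean document; each statement's English description precedes it below -/
import Mathlib

section
/- (Normal equations characterization.) In the setting of the Kalman gain problem, K ∈ ℝ^{p×q} minimizes E‖X − K Y‖²_D over ℝ^{p×q} if and only if π K Cov(Y) = π Cov(X,Y), where π = D⁻ D is the orthogonal projector onto the column space of D. -/
/-!
Expanding the weighted error around `K` gives
`f (K + B) = f K - 2 E[(X - K Y)ᵀ D⁻ B Y] + E[(B Y)ᵀ D⁻ B Y]`, and the last term is nonnegative
because the Moore–Penrose inverse of a positive semidefinite matrix is positive semidefinite.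
Hence `K` is a minimizer iff the residual `X - K Y` is `D⁻`-orthogonal to every `B Y`. That inner
product is `tr (D⁻ (Cov(X,Y) - K Cov(Y)) Bᵀ)`, so orthogonality means
`D⁻ (Cov(X,Y) - K Cov(Y)) = 0`, which is equivalent to the normal equations because
`D⁻ = D⁻ D D⁻` and `D⁻ D = D D⁻`.
-/

open Matrix MeasureTheory ProbabilityTheory

/-- Cross-covariance matrix `E[U Wᵀ]` of two mean-zero random vectors. -/
noncomputable def covMatrix {Ω : Type*} [MeasurableSpace Ω] (μ : Measure Ω)
    {p q : ℕ} (U : Ω → Fin p → ℝ) (W : Ω → Fin q → ℝ) :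
    Matrix (Fin p) (Fin q) ℝ :=
  Matrix.of fun i j => ∫ ω, U ω i * W ω j ∂μ

structure IsMoorePenroseInverse {m n R : Type*} [Fintype m] [Fintype n] [CommRing R]
    (A : Matrix m n R) (G : Matrix n m R) : Prop where
  mul_inv_mul : A * G * A = A
  inv_mul_inv : G * A * G = G
  transpose_mul_inv : (A * G)ᵀ = A * G
  transpose_inv_mul : (G * A)ᵀ = G * A

namespace IsMoorePenroseInverse

section Rectangular

variable {m n R : Type*} [Fintype m] [Fintype n] [CommRing R]
  {A : Matrix m n R} {G G' : Matrix n m R}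

theorem transpose (h : IsMoorePenroseInverse A G) : IsMoorePenroseInverse Aᵀ Gᵀ where
  mul_inv_mul := by
    simpa only [transpose_mul, Matrix.mul_assoc] using congrArg Matrix.transpose h.mul_inv_mul
  inv_mul_inv := by
    simpa only [transpose_mul, Matrix.mul_assoc] using congrArg Matrix.transpose h.inv_mul_inv
  transpose_mul_inv := by rw [← transpose_mul, transpose_transpose, h.transpose_inv_mul]
  transpose_inv_mul := by rw [← transpose_mul, transpose_transpose, h.transpose_mul_inv]

theorem unique (h : IsMoorePenroseInverse A G) (h' : IsMoorePenroseInverse A G') : G = G' := by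
  have hAG : A * G = A * G' :=
    calc A * G = (A * G' * (A * G))ᵀ := by
          rw [← Matrix.mul_assoc, h'.mul_inv_mul, h.transpose_mul_inv]
      _ = A * G * (A * G') := by
          rw [transpose_mul, h.transpose_mul_inv, h'.transpose_mul_inv]
      _ = A * G' := by rw [← Matrix.mul_assoc, h.mul_inv_mul]
  have hGA : G * A = G' * A :=
    calc G * A = (G * A * (G' * A))ᵀ := by
          rw [Matrix.mul_assoc, ← Matrix.mul_assoc A, h'.mul_inv_mul, h.transpose_inv_mul]
      _ = G' * A * (G * A) := by
          rw [transpose_mul, h.transpose_inv_mul, h'.transpose_inv_mul]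
      _ = G' * A := by rw [Matrix.mul_assoc, ← Matrix.mul_assoc A G A, h.mul_inv_mul]
  calc G = G * (A * G') := by rw [← hAG, ← Matrix.mul_assoc, h.inv_mul_inv]
    _ = G' := by rw [← Matrix.mul_assoc, hGA, h'.inv_mul_inv]

end Rectangular

section Square

variable {n R : Type*} [Fintype n] [CommRing R] {A G : Matrix n n R}

theorem transpose_eq_of_isSymm (h : IsMoorePenroseInverse A G) (hA : A.IsSymm) : Gᵀ = G :=
  (hA.eq ▸ h.transpose).unique h

theorem mul_comm_of_isSymm (h : IsMoorePenroseInverse A G) (hA : A.IsSymm) : G * A = A * G := by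
  rw [← h.transpose_inv_mul, transpose_mul, hA.eq, h.transpose_eq_of_isSymm hA]

theorem mul_eq_zero_iff_of_isSymm {k : Type*} (h : IsMoorePenroseInverse A G) (hA : A.IsSymm)
    (N : Matrix n k R) : G * N = 0 ↔ G * A * N = 0 := by
  constructor
  · intro hN
    rw [h.mul_comm_of_isSymm hA, Matrix.mul_assoc, hN, Matrix.mul_zero]
  · intro hN
    calc G * N = G * (G * A * N) := by
          rw [h.mul_comm_of_isSymm hA, ← Matrix.mul_assoc, ← Matrix.mul_assoc, h.inv_mul_inv]
      _ = 0 := by rw [hN, Matrix.mul_zero]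

theorem posSemidef {A G : Matrix n n ℝ} (h : IsMoorePenroseInverse A G)
    (hA : A.PosSemidef) : G.PosSemidef := by
  have := hA.conjTranspose_mul_mul_same G
  rwa [conjTranspose_eq_transpose_of_trivial,
    h.transpose_eq_of_isSymm (isHermitian_iff_isSymm.mp hA.isHermitian), h.inv_mul_inv] at this

end Square

end IsMoorePenroseInverse

section SecondMoments

variable {Ω ι κ ν : Type*} [MeasurableSpace Ω] {μ : Measure Ω} [Fintype ι] [Fintype κ]

theorem memLp_mulVec {r : ENNReal} {V : Ω → κ → ℝ} (hV : ∀ k, MemLp (fun ω => V ω k) r μ)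
    (A : Matrix ν κ ℝ) (i : ν) : MemLp (fun ω => (A *ᵥ V ω) i) r μ :=
  memLp_finsetSum _ fun k _ => (hV k).const_mul (A i k)

theorem integrable_dotProduct_mulVec {U : Ω → ι → ℝ} {V : Ω → κ → ℝ}
    (hU : ∀ i, MemLp (fun ω => U ω i) 2 μ) (hV : ∀ k, MemLp (fun ω => V ω k) 2 μ)
    (A : Matrix ι κ ℝ) : Integrable (fun ω => U ω ⬝ᵥ A *ᵥ V ω) μ :=
  integrable_finsetSum _ fun i _ => (hU i).integrable_mul (memLp_mulVec hV A i)

theorem integral_dotProduct_mulVec {p q : ℕ} {U : Ω → Fin p → ℝ} {V : Ω → Fin q → ℝ}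
    (hU : ∀ i, MemLp (fun ω => U ω i) 2 μ) (hV : ∀ k, MemLp (fun ω => V ω k) 2 μ)
    (A : Matrix (Fin p) (Fin q) ℝ) :
    ∫ ω, U ω ⬝ᵥ A *ᵥ V ω ∂μ = trace (covMatrix μ U V * Aᵀ) := by
  have hpoint : ∀ ω, U ω ⬝ᵥ A *ᵥ V ω = ∑ i, ∑ k, A i k * (U ω i * V ω k) := fun ω => by
    simp only [dotProduct, mulVec, Finset.mul_sum]
    exact Finset.sum_congr rfl fun i _ => Finset.sum_congr rfl fun k _ => by ring
  have hint : ∀ i k, Integrable (fun ω => U ω i * V ω k) μ := fun i k =>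
    (hU i).integrable_mul (hV k)
  simp only [hpoint, trace, diag_apply, mul_apply, transpose_apply, covMatrix, of_apply]
  rw [integral_finsetSum _ fun i _ =>
    integrable_finsetSum _ fun k _ => (hint i k).const_mul (A i k)]
  refine Finset.sum_congr rfl fun i _ => ?_
  rw [integral_finsetSum _ fun k _ => (hint i k).const_mul (A i k)]
  exact Finset.sum_congr rfl fun k _ => by rw [integral_const_mul, mul_comm]

theorem integral_sub_mulVec_dotProduct_mulVec {p q : ℕ} {X : Ω → Fin p → ℝ} {Y : Ω → Fin q → ℝ}
    (hX : ∀ i, MemLp (fun ω => X ω i) 2 μ) (hY : ∀ j, MemLp (fun ω => Y ω j) 2 μ)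
    (K A : Matrix (Fin p) (Fin q) ℝ) :
    ∫ ω, (X ω - K *ᵥ Y ω) ⬝ᵥ A *ᵥ Y ω ∂μ
      = trace ((covMatrix μ X Y - K * covMatrix μ Y Y) * Aᵀ) := by
  have hpoint : ∀ ω, (X ω - K *ᵥ Y ω) ⬝ᵥ A *ᵥ Y ω
      = X ω ⬝ᵥ A *ᵥ Y ω - Y ω ⬝ᵥ (Kᵀ * A) *ᵥ Y ω := fun ω => by
    rw [sub_dotProduct, ← mulVec_mulVec, mulVec_transpose, dotProduct_comm (Y ω),
      ← dotProduct_mulVec, dotProduct_comm (A *ᵥ Y ω)]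
  simp only [hpoint]
  rw [integral_sub (integrable_dotProduct_mulVec hX hY A) (integrable_dotProduct_mulVec hY hY _),
    integral_dotProduct_mulVec hX hY, integral_dotProduct_mulVec hY hY, Matrix.sub_mul,
    trace_sub, transpose_mul, transpose_transpose, ← Matrix.mul_assoc, trace_mul_cycle]

end SecondMoments

theorem sub_dotProduct_mulVec_sub {n R : Type*} [Fintype n] [CommRing R] {M : Matrix n n R}
    (hM : M.IsSymm) (u v : n → R) :
    (u - v) ⬝ᵥ M *ᵥ (u - v) = u ⬝ᵥ M *ᵥ u - 2 * (u ⬝ᵥ M *ᵥ v) + v ⬝ᵥ M *ᵥ v := by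
  have hcomm : v ⬝ᵥ M *ᵥ u = u ⬝ᵥ M *ᵥ v := by
    rw [dotProduct_mulVec, dotProduct_comm, ← mulVec_transpose, hM.eq]
  rw [mulVec_sub, sub_dotProduct, dotProduct_sub, dotProduct_sub, hcomm]
  ring

section LeastSquares

variable {Ω ι κ : Type*} [MeasurableSpace Ω] [Fintype ι] [Fintype κ]

noncomputable def meanSqError (μ : Measure Ω) (M : Matrix ι ι ℝ) (X : Ω → ι → ℝ)
    (Y : Ω → κ → ℝ) (K : Matrix ι κ ℝ) : ℝ :=
  ∫ ω, (X ω - K *ᵥ Y ω) ⬝ᵥ M *ᵥ (X ω - K *ᵥ Y ω) ∂μ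

variable {μ : Measure Ω} {M : Matrix ι ι ℝ} {X : Ω → ι → ℝ} {Y : Ω → κ → ℝ}

theorem meanSqError_add (hM : M.IsSymm) (hX : ∀ i, MemLp (fun ω => X ω i) 2 μ)
    (hY : ∀ j, MemLp (fun ω => Y ω j) 2 μ) (K B : Matrix ι κ ℝ) :
    meanSqError μ M X Y (K + B) = meanSqError μ M X Y K
      - 2 * ∫ ω, (X ω - K *ᵥ Y ω) ⬝ᵥ M *ᵥ (B *ᵥ Y ω) ∂μ
      + ∫ ω, (B *ᵥ Y ω) ⬝ᵥ M *ᵥ (B *ᵥ Y ω) ∂μ := by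
  have hE : ∀ i, MemLp (fun ω => (X ω - K *ᵥ Y ω) i) 2 μ := fun i =>
    (hX i).sub (memLp_mulVec hY K i)
  have hBY : ∀ i, MemLp (fun ω => (B *ᵥ Y ω) i) 2 μ := memLp_mulVec hY B
  have hpoint : ∀ ω, (X ω - (K + B) *ᵥ Y ω) ⬝ᵥ M *ᵥ (X ω - (K + B) *ᵥ Y ω)
      = (X ω - K *ᵥ Y ω) ⬝ᵥ M *ᵥ (X ω - K *ᵥ Y ω)
        - 2 * ((X ω - K *ᵥ Y ω) ⬝ᵥ M *ᵥ (B *ᵥ Y ω)) + (B *ᵥ Y ω) ⬝ᵥ M *ᵥ (B *ᵥ Y ω) :=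
    fun ω => by rw [add_mulVec, ← sub_sub, sub_dotProduct_mulVec_sub hM]
  have hEE := integrable_dotProduct_mulVec hE hE M
  have hEB : Integrable (fun ω => 2 * ((X ω - K *ᵥ Y ω) ⬝ᵥ M *ᵥ (B *ᵥ Y ω))) μ :=
    (integrable_dotProduct_mulVec hE hBY M).const_mul 2
  simp only [meanSqError, hpoint]
  rw [integral_add ?_ (integrable_dotProduct_mulVec hBY hBY M), integral_sub hEE hEB,
    integral_const_mul]
  exact hEE.sub hEB

theorem forall_meanSqError_le_iff_orthogonal (hM : M.PosSemidef)
    (hX : ∀ i, MemLp (fun ω => X ω i) 2 μ) (hY : ∀ j, MemLp (fun ω => Y ω j) 2 μ)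
    (K : Matrix ι κ ℝ) :
    (∀ K', meanSqError μ M X Y K ≤ meanSqError μ M X Y K') ↔
      ∀ B : Matrix ι κ ℝ, ∫ ω, (X ω - K *ᵥ Y ω) ⬝ᵥ M *ᵥ (B *ᵥ Y ω) ∂μ = 0 := by
  have hexp := meanSqError_add (isHermitian_iff_isSymm.mp hM.isHermitian) hX hY K
  have hnonneg (B : Matrix ι κ ℝ) : 0 ≤ ∫ ω, (B *ᵥ Y ω) ⬝ᵥ M *ᵥ (B *ᵥ Y ω) ∂μ :=
    integral_nonneg fun ω => by simpa using hM.dotProduct_mulVec_nonneg (B *ᵥ Y ω)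
  constructor
  · intro hmin B
    -- a quadratic in `t` that is nonnegative and vanishes at `0` has no linear term
    have hquad : ∀ t : ℝ, 0 ≤ (∫ ω, (B *ᵥ Y ω) ⬝ᵥ M *ᵥ (B *ᵥ Y ω) ∂μ) * (t * t)
        + (-2 * ∫ ω, (X ω - K *ᵥ Y ω) ⬝ᵥ M *ᵥ (B *ᵥ Y ω) ∂μ) * t + 0 := fun t => by
      have := hmin (K + t • B)
      simp only [hexp, smul_mulVec, mulVec_smul, dotProduct_smul, smul_dotProduct, smul_eq_mul,
        integral_const_mul] at this
      linarith
    have := discrim_le_zero hquad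
    rw [discrim] at this
    nlinarith
  · intro horth K'
    have := hexp (K' - K)
    rw [add_sub_cancel, horth, mul_zero, sub_zero] at this
    linarith [hnonneg (K' - K)]

end LeastSquares

theorem forall_integral_orthogonal_iff_mul_eq_zero {Ω : Type*} [MeasurableSpace Ω]
    {μ : Measure Ω} {p q : ℕ} {M : Matrix (Fin p) (Fin p) ℝ} {X : Ω → Fin p → ℝ}
    {Y : Ω → Fin q → ℝ} (hM : M.IsSymm)
    (hX : ∀ i, MemLp (fun ω => X ω i) 2 μ) (hY : ∀ j, MemLp (fun ω => Y ω j) 2 μ)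
    (K : Matrix (Fin p) (Fin q) ℝ) :
    (∀ B : Matrix (Fin p) (Fin q) ℝ, ∫ ω, (X ω - K *ᵥ Y ω) ⬝ᵥ M *ᵥ (B *ᵥ Y ω) ∂μ = 0) ↔
      M * (covMatrix μ X Y - K * covMatrix μ Y Y) = 0 := by
  have htrace (B : Matrix (Fin p) (Fin q) ℝ) : ∫ ω, (X ω - K *ᵥ Y ω) ⬝ᵥ M *ᵥ (B *ᵥ Y ω) ∂μ
      = trace (M * (covMatrix μ X Y - K * covMatrix μ Y Y) * Bᵀ) := by
    simp only [mulVec_mulVec]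
    rw [integral_sub_mulVec_dotProduct_mulVec hX hY, transpose_mul, hM.eq, ← Matrix.mul_assoc,
      trace_mul_cycle]
  simp only [htrace]
  refine ⟨fun h => ?_, fun h B => by rw [h, Matrix.zero_mul, trace_zero]⟩
  exact trace_mul_conjTranspose_self_eq_zero_iff.mp (h _)

theorem kalman_gain_normal_equations_general {Ω : Type*} [MeasurableSpace Ω]
    (μ : Measure Ω) {p q : ℕ}
    (X : Ω → Fin p → ℝ) (ε : Ω → Fin q → ℝ)
    (Z : Matrix (Fin q) (Fin p) ℝ)
    (hXL2 : ∀ i, MemLp (fun ω => X ω i) 2 μ)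
    (hεL2 : ∀ j, MemLp (fun ω => ε ω j) 2 μ)
    (Y : Ω → Fin q → ℝ) (hY : ∀ ω, Y ω = Z.mulVec (X ω) + ε ω)
    (D Dm : Matrix (Fin p) (Fin p) ℝ) (hD : D.PosSemidef)
    (hD1 : Dm * D * Dm = Dm) (hD2 : D * Dm * D = D)
    (hD3 : (Dm * D)ᵀ = Dm * D) (hD4 : (D * Dm)ᵀ = D * Dm)
    :
    ∀ K : Matrix (Fin p) (Fin q) ℝ,
      (∀ K' : Matrix (Fin p) (Fin q) ℝ,
        (∫ ω, (X ω - K.mulVec (Y ω)) ⬝ᵥ Dm.mulVec (X ω - K.mulVec (Y ω)) ∂μ) ≤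
        ∫ ω, (X ω - K'.mulVec (Y ω)) ⬝ᵥ Dm.mulVec (X ω - K'.mulVec (Y ω)) ∂μ)
      ↔ (Dm * D) * K * covMatrix μ Y Y = (Dm * D) * covMatrix μ X Y := by
  intro K
  have hpinv : IsMoorePenroseInverse D Dm := ⟨hD2, hD1, hD4, hD3⟩
  have hDsymm : D.IsSymm := isHermitian_iff_isSymm.mp hD.isHermitian
  have hYL2 (j : Fin q) : MemLp (fun ω => Y ω j) 2 μ := by
    simp_rw [hY]
    exact (memLp_mulVec hXL2 Z j).add (hεL2 j)
  refine (forall_meanSqError_le_iff_orthogonal (hpinv.posSemidef hD) hXL2 hYL2 K).trans ?_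
  rw [forall_integral_orthogonal_iff_mul_eq_zero (hpinv.transpose_eq_of_isSymm hDsymm) hXL2 hYL2,
    hpinv.mul_eq_zero_iff_of_isSymm hDsymm, Matrix.mul_sub, sub_eq_zero, Matrix.mul_assoc _ K,
    eq_comm]

/-- `K` minimizes `E‖X − K Y‖²_D` iff the normal equations
`π K Cov(Y) = π Cov(X,Y)` hold, where `π = D⁻ D`. -/
theorem kalman_gain_normal_equations {Ω : Type*} [MeasurableSpace Ω]
    (μ : Measure Ω) [IsProbabilityMeasure μ] {p q : ℕ}
    (X : Ω → Fin p → ℝ) (ε : Ω → Fin q → ℝ)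
    (Z : Matrix (Fin q) (Fin p) ℝ)
    (hXmeas : Measurable X) (hεmeas : Measurable ε)
    (hXL2 : ∀ i, MemLp (fun ω => X ω i) 2 μ)
    (hεL2 : ∀ j, MemLp (fun ω => ε ω j) 2 μ)
    (hXmean : ∀ i, ∫ ω, X ω i ∂μ = 0)
    (hεmean : ∀ j, ∫ ω, ε ω j ∂μ = 0)
    (hindep : IndepFun X ε μ)
    (Y : Ω → Fin q → ℝ) (hY : ∀ ω, Y ω = Z.mulVec (X ω) + ε ω)
    (D Dm : Matrix (Fin p) (Fin p) ℝ) (hD : D.PosSemidef)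
    (hD1 : Dm * D * Dm = Dm) (hD2 : D * Dm * D = D)
    (hD3 : (Dm * D)ᵀ = Dm * D) (hD4 : (D * Dm)ᵀ = D * Dm)
    :
    ∀ K : Matrix (Fin p) (Fin q) ℝ,
      (∀ K' : Matrix (Fin p) (Fin q) ℝ,
        (∫ ω, (X ω - K.mulVec (Y ω)) ⬝ᵥ Dm.mulVec (X ω - K.mulVec (Y ω)) ∂μ) ≤
        ∫ ω, (X ω - K'.mulVec (Y ω)) ⬝ᵥ Dm.mulVec (X ω - K'.mulVec (Y ω)) ∂μ)
      ↔ (Dm * D) * K * covMatrix μ Y Y = (Dm * D) * covMatrix μ X Y :=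
  kalman_gain_normal_equations_general μ X ε Z hXL2 hεL2 Y hY D Dm hD hD1 hD2 hD3 hD4
end

section
/- (Uniqueness structure of minimizers.) Let K̂ = Cov(X,Y) Cov(Y)⁻. A matrix K ∈ ℝ^{p×q} minimizes E‖X − K Y‖²_D if and only if K = K̂ + A + B for some A with A Cov(Y) = 0 and some B with D B = 0. -/
/-!
Because `ker Cov(Y) ⊆ ker Cov(X, Y)`, the residual `X - K̂ Y` is uncorrelated with `Y`, so
for every `K` the error splits as `E‖X - K̂ Y‖²_D + tr(D⁻ (K - K̂) Cov(Y) (K - K̂)ᵀ)`.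
Writing the positive semidefinite `D⁻` and `Cov(Y)` as `Rᵀ R` and `Sᵀ S`, the second term is
`‖R (K - K̂) Sᵀ‖²`, which vanishes iff `D⁻ (K - K̂) Cov(Y) = 0`. Since `D` commutes with its
pseudoinverse, this holds iff `K - K̂ = D D⁻ (K - K̂) + (1 - D D⁻) (K - K̂)` is a sum `A + B`
with `A Cov(Y) = 0` and `D B = 0`.
-/

open Matrix MeasureTheory ProbabilityTheory

open scoped MatrixOrder

structure IsMoorePenroseInverse_s5 {R : Type*} [Mul R] [Star R] (a b : R) : Prop where
  mul_mul_left : b * a * b = b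
  mul_mul_right : a * b * a = a
  star_mul_left : star (b * a) = b * a
  star_mul_right : star (a * b) = a * b

namespace IsMoorePenroseInverse_s5

variable {R : Type*} [Semigroup R] [StarMul R] {a b c : R}

lemma unique_s5 (hb : IsMoorePenroseInverse_s5 a b) (hc : IsMoorePenroseInverse_s5 a c) : b = c := by
  have hab : a * b = a * c :=
    calc a * b = star (a * b) := hb.star_mul_right.symm
      _ = star b * star (a * c * a) := by rw [star_mul, hc.mul_mul_right]
      _ = star (a * b) * star (a * c) := by simp only [star_mul, mul_assoc]
      _ = a * b * a * c := by rw [hb.star_mul_right, hc.star_mul_right, ← mul_assoc]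
      _ = a * c := by rw [hb.mul_mul_right]
  have hba : b * a = c * a :=
    calc b * a = star (b * a) := hb.star_mul_left.symm
      _ = star (a * c * a) * star b := by rw [star_mul, hc.mul_mul_right]
      _ = star (c * a) * star (b * a) := by simp only [star_mul, mul_assoc]
      _ = c * (a * b * a) := by rw [hb.star_mul_left, hc.star_mul_left, mul_assoc, mul_assoc]
      _ = c * a := by rw [hb.mul_mul_right]
  calc b = b * a * b := hb.mul_mul_left.symm
    _ = c * a * c := by rw [mul_assoc, hab, ← mul_assoc, hba]
    _ = c := hc.mul_mul_left

lemma star (h : IsMoorePenroseInverse_s5 a b) : IsMoorePenroseInverse_s5 (star a) (star b) where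
  mul_mul_left := by rw [← star_mul, ← star_mul, ← mul_assoc, h.mul_mul_left]
  mul_mul_right := by rw [← star_mul, ← star_mul, ← mul_assoc, h.mul_mul_right]
  star_mul_left := by rw [← star_mul, star_star, h.star_mul_right]
  star_mul_right := by rw [← star_mul, star_star, h.star_mul_left]

lemma isSelfAdjoint (h : IsMoorePenroseInverse_s5 a b) (ha : IsSelfAdjoint a) :
    IsSelfAdjoint b :=
  (ha.star_eq ▸ h.star).unique_s5 h

lemma commute (h : IsMoorePenroseInverse_s5 a b) (ha : IsSelfAdjoint a) : Commute a b := by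
  rw [Commute, SemiconjBy, ← h.star_mul_right, star_mul, ha.star_eq, (h.isSelfAdjoint ha).star_eq]

end IsMoorePenroseInverse_s5

namespace Matrix

variable {m n : Type*} [Fintype m] [Fintype n]

lemma trace_transpose_mul_mul_mul_transpose (R : Matrix m m ℝ) (S : Matrix n n ℝ)
    (Δ : Matrix m n ℝ) :
    (Rᵀ * R * Δ * (Sᵀ * S) * Δᵀ).trace = (R * Δ * Sᵀ * (R * Δ * Sᵀ)ᴴ).trace := by
  simp only [conjTranspose_eq_transpose_of_trivial, transpose_mul, transpose_transpose,
    Matrix.mul_assoc]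
  rw [trace_mul_comm]
  simp only [Matrix.mul_assoc]

lemma exists_eq_transpose_mul_self {P : Matrix n n ℝ} (hP : P.PosSemidef) :
    ∃ R : Matrix n n ℝ, P = Rᵀ * R := by
  classical
  obtain ⟨R, hR⟩ := CStarAlgebra.nonneg_iff_eq_star_mul_self.mp hP.nonneg
  exact ⟨R, by rw [hR, star_eq_conjTranspose, conjTranspose_eq_transpose_of_trivial]⟩

namespace PosSemidef

variable {P : Matrix m m ℝ} {Q : Matrix n n ℝ}

lemma trace_mul_mul_mul_transpose_nonneg (hP : P.PosSemidef) (hQ : Q.PosSemidef)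
    (Δ : Matrix m n ℝ) : 0 ≤ (P * Δ * Q * Δᵀ).trace := by
  obtain ⟨R, rfl⟩ := exists_eq_transpose_mul_self hP
  obtain ⟨S, rfl⟩ := exists_eq_transpose_mul_self hQ
  rw [trace_transpose_mul_mul_mul_transpose]
  exact (posSemidef_self_mul_conjTranspose _).trace_nonneg

lemma trace_mul_mul_mul_transpose_eq_zero_iff (hP : P.PosSemidef) (hQ : Q.PosSemidef)
    (Δ : Matrix m n ℝ) : (P * Δ * Q * Δᵀ).trace = 0 ↔ P * Δ * Q = 0 := by
  refine ⟨fun h => ?_, fun h => by rw [h, Matrix.zero_mul, trace_zero]⟩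
  obtain ⟨R, rfl⟩ := exists_eq_transpose_mul_self hP
  obtain ⟨S, rfl⟩ := exists_eq_transpose_mul_self hQ
  rw [trace_transpose_mul_mul_mul_transpose, trace_mul_conjTranspose_self_eq_zero_iff] at h
  calc Rᵀ * R * Δ * (Sᵀ * S) = Rᵀ * (R * Δ * Sᵀ) * S := by simp only [Matrix.mul_assoc]
    _ = 0 := by rw [h, Matrix.mul_zero, Matrix.zero_mul]

end PosSemidef

lemma mul_sub_mul_eq_zero_iff_exists_add {R : Type*} [Ring R] [DecidableEq m]
    {D Dm : Matrix m m R} (hDm : Dm * D * Dm = Dm) (hD : D * Dm * D = D) (hcomm : Commute D Dm)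
    (C : Matrix n n R) (K K₀ : Matrix m n R) :
    Dm * (K - K₀) * C = 0 ↔
      ∃ A B : Matrix m n R, A * C = 0 ∧ D * B = 0 ∧ K = K₀ + A + B := by
  constructor
  · intro h
    refine ⟨D * Dm * (K - K₀), (1 - D * Dm) * (K - K₀), ?_, ?_, ?_⟩
    · rw [Matrix.mul_assoc D, Matrix.mul_assoc D, h, Matrix.mul_zero]
    · rw [← Matrix.mul_assoc, Matrix.mul_sub D, Matrix.mul_one, hcomm.eq, ← Matrix.mul_assoc,
        hD, sub_self, Matrix.zero_mul]
    · rw [add_assoc, ← Matrix.add_mul, add_sub_cancel, Matrix.one_mul, add_sub_cancel]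
  · rintro ⟨A, B, hA, hB, rfl⟩
    have hDmB : Dm * B = 0 := by
      rw [← hDm, Matrix.mul_assoc Dm, hcomm.eq, Matrix.mul_assoc, Matrix.mul_assoc, hB,
        Matrix.mul_zero, Matrix.mul_zero]
    rw [add_assoc, add_sub_cancel_left, Matrix.mul_add, Matrix.add_mul, Matrix.mul_assoc, hA,
      hDmB, Matrix.mul_zero, Matrix.zero_mul, add_zero]

end Matrix

section Covariance

variable {Ω : Type*} [MeasurableSpace Ω] {μ : Measure Ω} {n m k : ℕ}
  {U : Ω → Fin n → ℝ} {W : Ω → Fin k → ℝ}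

lemma memLp_mulVec_s5 (A : Matrix (Fin m) (Fin n) ℝ) (hU : ∀ i, MemLp (fun ω => U ω i) 2 μ)
    (i : Fin m) : MemLp (fun ω => (A *ᵥ U ω) i) 2 μ :=
  memLp_finsetSum Finset.univ fun j _ => (hU j).const_mul (A i j)

lemma memLp_dotProduct (hW : ∀ i, MemLp (fun ω => W ω i) 2 μ) (v : Fin k → ℝ) :
    MemLp (fun ω => W ω ⬝ᵥ v) 2 μ :=
  memLp_finsetSum _ fun j _ => (hW j).mul_const (v j)

lemma integrable_mul_of_memLp_two {f g : Ω → ℝ} (hf : MemLp f 2 μ) (hg : MemLp g 2 μ) :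
    Integrable (fun ω => f ω * g ω) μ :=
  hf.integrable_mul hg

lemma covMatrix_transpose : (covMatrix μ U W)ᵀ = covMatrix μ W U := by
  ext i j
  simp only [covMatrix, transpose_apply, of_apply, mul_comm]

lemma covMatrix_sub_left {V : Ω → Fin n → ℝ} (hU : ∀ i, MemLp (fun ω => U ω i) 2 μ)
    (hV : ∀ i, MemLp (fun ω => V ω i) 2 μ) (hW : ∀ i, MemLp (fun ω => W ω i) 2 μ) :
    covMatrix μ (fun ω => U ω - V ω) W = covMatrix μ U W - covMatrix μ V W := by
  ext i j
  simp only [covMatrix, of_apply, Matrix.sub_apply, Pi.sub_apply, sub_mul]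
  exact integral_sub (integrable_mul_of_memLp_two (hU i) (hW j))
    (integrable_mul_of_memLp_two (hV i) (hW j))

lemma covMatrix_sub_right {V : Ω → Fin k → ℝ} (hU : ∀ i, MemLp (fun ω => U ω i) 2 μ)
    (hW : ∀ i, MemLp (fun ω => W ω i) 2 μ) (hV : ∀ i, MemLp (fun ω => V ω i) 2 μ) :
    covMatrix μ U (fun ω => W ω - V ω) = covMatrix μ U W - covMatrix μ U V := by
  rw [← covMatrix_transpose, covMatrix_sub_left hW hV hU, transpose_sub, covMatrix_transpose,
    covMatrix_transpose]

lemma covMatrix_mulVec_left (A : Matrix (Fin m) (Fin n) ℝ)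
    (hU : ∀ i, MemLp (fun ω => U ω i) 2 μ) (hW : ∀ i, MemLp (fun ω => W ω i) 2 μ) :
    covMatrix μ (fun ω => A *ᵥ U ω) W = A * covMatrix μ U W := by
  ext i j
  simp only [covMatrix, of_apply, mul_apply, mulVec, dotProduct, Finset.sum_mul, mul_assoc]
  rw [integral_finsetSum _ fun l _ =>
    (integrable_mul_of_memLp_two (hU l) (hW j)).const_mul (A i l)]
  simp only [integral_const_mul]

lemma covMatrix_mulVec_right (A : Matrix (Fin m) (Fin k) ℝ)
    (hU : ∀ i, MemLp (fun ω => U ω i) 2 μ) (hW : ∀ i, MemLp (fun ω => W ω i) 2 μ) :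
    covMatrix μ U (fun ω => A *ᵥ W ω) = covMatrix μ U W * Aᵀ := by
  rw [← covMatrix_transpose, covMatrix_mulVec_left A hW hU, transpose_mul, covMatrix_transpose]

lemma covMatrix_mulVec_apply (hU : ∀ i, MemLp (fun ω => U ω i) 2 μ)
    (hW : ∀ i, MemLp (fun ω => W ω i) 2 μ) (v : Fin k → ℝ) (i : Fin n) :
    (covMatrix μ U W *ᵥ v) i = ∫ ω, U ω i * (W ω ⬝ᵥ v) ∂μ := by
  simp only [covMatrix, mulVec, dotProduct, of_apply, Finset.mul_sum, ← mul_assoc]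
  rw [integral_finsetSum _ fun j _ =>
    (integrable_mul_of_memLp_two (hU i) (hW j)).mul_const (v j)]
  simp only [integral_mul_const]

lemma dotProduct_covMatrix_mulVec_self (hW : ∀ i, MemLp (fun ω => W ω i) 2 μ)
    (v : Fin k → ℝ) :
    v ⬝ᵥ (covMatrix μ W W *ᵥ v) = ∫ ω, (W ω ⬝ᵥ v) ^ 2 ∂μ := by
  have hsq (ω : Ω) : (W ω ⬝ᵥ v) ^ 2 = ∑ i, v i * (W ω i * (W ω ⬝ᵥ v)) := by
    simp only [sq, dotProduct, Finset.sum_mul]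
    exact Finset.sum_congr rfl fun i _ => by ring
  simp only [hsq]
  rw [integral_finsetSum _ fun i _ =>
    (integrable_mul_of_memLp_two (hW i) (memLp_dotProduct hW v)).const_mul (v i)]
  simp only [integral_const_mul, ← covMatrix_mulVec_apply hW hW]
  rfl

lemma covMatrix_posSemidef (hW : ∀ i, MemLp (fun ω => W ω i) 2 μ) :
    (covMatrix μ W W).PosSemidef := by
  refine PosSemidef.of_dotProduct_mulVec_nonneg ?_ fun v => ?_
  · rw [IsHermitian, conjTranspose_eq_transpose_of_trivial, covMatrix_transpose]
  · rw [star_trivial, dotProduct_covMatrix_mulVec_self hW]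
    exact integral_nonneg fun ω => sq_nonneg _

lemma covMatrix_mulVec_eq_zero (hU : ∀ i, MemLp (fun ω => U ω i) 2 μ)
    (hW : ∀ i, MemLp (fun ω => W ω i) 2 μ) {v : Fin k → ℝ}
    (hv : covMatrix μ W W *ᵥ v = 0) :
    covMatrix μ U W *ᵥ v = 0 := by
  have hsq : ∫ ω, (W ω ⬝ᵥ v) ^ 2 ∂μ = 0 := by
    rw [← dotProduct_covMatrix_mulVec_self hW, hv, dotProduct_zero]
  have hzero : (fun ω => W ω ⬝ᵥ v) =ᵐ[μ] 0 := by
    filter_upwards [(integral_eq_zero_iff_of_nonneg (fun ω => sq_nonneg _)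
      (memLp_dotProduct hW v).integrable_sq).mp hsq] with ω hω
    exact pow_eq_zero_iff two_ne_zero |>.mp hω
  ext i
  rw [covMatrix_mulVec_apply hU hW, Pi.zero_apply, integral_eq_zero_of_ae]
  filter_upwards [hzero] with ω hω
  simp [hω]

lemma covMatrix_mul_eq_zero (hU : ∀ i, MemLp (fun ω => U ω i) 2 μ)
    (hW : ∀ i, MemLp (fun ω => W ω i) 2 μ) {N : Matrix (Fin k) (Fin m) ℝ}
    (hN : covMatrix μ W W * N = 0) : covMatrix μ U W * N = 0 := by
  ext i j
  exact congrFun (covMatrix_mulVec_eq_zero hU hW (v := Nᵀ j) (funext (congrFun₂ hN · j))) i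

lemma integral_dotProduct_mulVec_self (Dm : Matrix (Fin n) (Fin n) ℝ)
    (hU : ∀ i, MemLp (fun ω => U ω i) 2 μ) :
    ∫ ω, U ω ⬝ᵥ (Dm *ᵥ U ω) ∂μ = (Dm * covMatrix μ U U).trace := by
  have h (ω : Ω) : U ω ⬝ᵥ (Dm *ᵥ U ω) = ∑ i, U ω i * (U ω ⬝ᵥ Dm i) :=
    Finset.sum_congr rfl fun i _ => congrArg _ (dotProduct_comm _ _)
  simp only [h]
  rw [integral_finsetSum _ fun i _ =>
    integrable_mul_of_memLp_two (hU i) (memLp_dotProduct hU (Dm i))]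
  simp only [← covMatrix_mulVec_apply hU hU]
  rw [← trace_transpose, transpose_mul, covMatrix_transpose]
  rfl

lemma covMatrix_sub_mulVec_self_of_covMatrix_eq_zero {R : Ω → Fin n → ℝ}
    (hR : ∀ i, MemLp (fun ω => R ω i) 2 μ) (hW : ∀ i, MemLp (fun ω => W ω i) 2 μ)
    (horth : covMatrix μ R W = 0)
    (Δ : Matrix (Fin n) (Fin k) ℝ) :
    covMatrix μ (fun ω => R ω - Δ *ᵥ W ω) (fun ω => R ω - Δ *ᵥ W ω) =
      covMatrix μ R R + Δ * covMatrix μ W W * Δᵀ := by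
  have hΔW := memLp_mulVec_s5 Δ hW
  have hRΔW : ∀ i, MemLp (fun ω => (R ω - Δ *ᵥ W ω) i) 2 μ := fun i => (hR i).sub (hΔW i)
  rw [covMatrix_sub_left hR hΔW hRΔW, covMatrix_sub_right hR hR hΔW,
    covMatrix_sub_right hΔW hR hΔW, covMatrix_mulVec_right Δ hR hW,
    covMatrix_mulVec_left Δ hW hR, covMatrix_mulVec_left Δ hW hΔW, covMatrix_mulVec_right Δ hW hW,
    ← covMatrix_transpose (U := R) (W := W), horth]
  simp [Matrix.mul_assoc]

lemma covMatrix_sub_covMatrix_mul_mulVec_eq_zero (hU : ∀ i, MemLp (fun ω => U ω i) 2 μ)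
    (hW : ∀ i, MemLp (fun ω => W ω i) 2 μ) {Cm : Matrix (Fin k) (Fin k) ℝ}
    (hCm : covMatrix μ W W * Cm * covMatrix μ W W = covMatrix μ W W) :
    covMatrix μ (fun ω => U ω - (covMatrix μ U W * Cm) *ᵥ W ω) W = 0 := by
  have hker : covMatrix μ U W * (Cm * covMatrix μ W W - 1) = 0 :=
    covMatrix_mul_eq_zero hU hW (by rw [Matrix.mul_sub, ← Matrix.mul_assoc, hCm, Matrix.mul_one,
      sub_self])
  rw [Matrix.mul_sub, Matrix.mul_one, sub_eq_zero] at hker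
  rw [covMatrix_sub_left hU (memLp_mulVec_s5 _ hW) hW, covMatrix_mulVec_left _ hW hW,
    Matrix.mul_assoc, hker, sub_self]

lemma integral_sub_mulVec_dotProduct_mulVec_s5 (Dm : Matrix (Fin n) (Fin n) ℝ)
    (hU : ∀ i, MemLp (fun ω => U ω i) 2 μ) (hW : ∀ i, MemLp (fun ω => W ω i) 2 μ)
    {K₀ : Matrix (Fin n) (Fin k) ℝ}
    (horth : covMatrix μ (fun ω => U ω - K₀ *ᵥ W ω) W = 0)
    (K : Matrix (Fin n) (Fin k) ℝ) :
    ∫ ω, (U ω - K *ᵥ W ω) ⬝ᵥ (Dm *ᵥ (U ω - K *ᵥ W ω)) ∂μ =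
      ∫ ω, (U ω - K₀ *ᵥ W ω) ⬝ᵥ (Dm *ᵥ (U ω - K₀ *ᵥ W ω)) ∂μ +
        (Dm * (K - K₀) * covMatrix μ W W * (K - K₀)ᵀ).trace := by
  have hres (K : Matrix (Fin n) (Fin k) ℝ) :
      ∀ i, MemLp (fun ω => (U ω - K *ᵥ W ω) i) 2 μ :=
    fun i => (hU i).sub (memLp_mulVec_s5 K hW i)
  have hsplit :
      (fun ω => U ω - K *ᵥ W ω) = fun ω => U ω - K₀ *ᵥ W ω - (K - K₀) *ᵥ W ω := by
    funext ω
    rw [sub_mulVec]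
    abel
  rw [integral_dotProduct_mulVec_self Dm (hres K), integral_dotProduct_mulVec_self Dm (hres K₀),
    hsplit, covMatrix_sub_mulVec_self_of_covMatrix_eq_zero (hres K₀) hW horth, Matrix.mul_add,
    trace_add]
  simp only [Matrix.mul_assoc]

end Covariance

theorem kalman_gain_minimizers_general {Ω : Type*} [MeasurableSpace Ω]
    (μ : Measure Ω) {p q : ℕ}
    (X : Ω → Fin p → ℝ) (ε : Ω → Fin q → ℝ)
    (Z : Matrix (Fin q) (Fin p) ℝ)
    (hXL2 : ∀ i, MemLp (fun ω => X ω i) 2 μ)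
    (hεL2 : ∀ j, MemLp (fun ω => ε ω j) 2 μ)
    (Y : Ω → Fin q → ℝ) (hY : ∀ ω, Y ω = Z.mulVec (X ω) + ε ω)
    (D Dm : Matrix (Fin p) (Fin p) ℝ) (hD : D.PosSemidef)
    (hD1 : Dm * D * Dm = Dm) (hD2 : D * Dm * D = D)
    (hD3 : (Dm * D)ᵀ = Dm * D) (hD4 : (D * Dm)ᵀ = D * Dm)
    (Cm : Matrix (Fin q) (Fin q) ℝ)
    (hC2 : covMatrix μ Y Y * Cm * covMatrix μ Y Y = covMatrix μ Y Y) :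
    ∀ K : Matrix (Fin p) (Fin q) ℝ,
      (∀ K' : Matrix (Fin p) (Fin q) ℝ,
        (∫ ω, (X ω - K.mulVec (Y ω)) ⬝ᵥ Dm.mulVec (X ω - K.mulVec (Y ω)) ∂μ) ≤
        ∫ ω, (X ω - K'.mulVec (Y ω)) ⬝ᵥ Dm.mulVec (X ω - K'.mulVec (Y ω)) ∂μ)
      ↔ ∃ A B : Matrix (Fin p) (Fin q) ℝ,
          A * covMatrix μ Y Y = 0 ∧ D * B = 0 ∧
          K = covMatrix μ X Y * Cm + A + B := by
  have hYL2 : ∀ j, MemLp (fun ω => Y ω j) 2 μ := fun j => by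
    simp only [hY]
    exact (memLp_mulVec_s5 Z hXL2 j).add (hεL2 j)
  have hDm : IsMoorePenroseInverse_s5 D Dm := by
    refine ⟨hD1, hD2, ?_, ?_⟩ <;>
      rwa [star_eq_conjTranspose, conjTranspose_eq_transpose_of_trivial]
  have hDmPSD : Dm.PosSemidef := by
    have := hD.conjTranspose_mul_mul_same Dm
    rwa [← star_eq_conjTranspose, (hDm.isSelfAdjoint hD.isHermitian).star_eq, hD1] at this
  have hCPSD := covMatrix_posSemidef hYL2
  have hobj := integral_sub_mulVec_dotProduct_mulVec_s5 Dm hXL2 hYL2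
    (covMatrix_sub_covMatrix_mul_mulVec_eq_zero hXL2 hYL2 hC2)
  have hgap (K : Matrix (Fin p) (Fin q) ℝ) :=
    hDmPSD.trace_mul_mul_mul_transpose_nonneg hCPSD (K - covMatrix μ X Y * Cm)
  intro K
  rw [← mul_sub_mul_eq_zero_iff_exists_add hD1 hD2 (hDm.commute hD.isHermitian),
    ← hDmPSD.trace_mul_mul_mul_transpose_eq_zero_iff hCPSD]
  constructor
  · intro hmin
    have := hmin (covMatrix μ X Y * Cm)
    rw [hobj K] at this
    exact le_antisymm (by linarith) (hgap K)
  · intro hK K'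
    rw [hobj K, hobj K', hK]
    linarith [hgap K']

/-- `K` minimizes `E‖X − K Y‖²_D` iff `K = K̂ + A + B` with
`A Cov(Y) = 0` and `D B = 0`, where `K̂ = Cov(X,Y) Cov(Y)⁻`. -/
theorem kalman_gain_minimizers {Ω : Type*} [MeasurableSpace Ω]
    (μ : Measure Ω) [IsProbabilityMeasure μ] {p q : ℕ}
    (X : Ω → Fin p → ℝ) (ε : Ω → Fin q → ℝ)
    (Z : Matrix (Fin q) (Fin p) ℝ)
    (hXmeas : Measurable X) (hεmeas : Measurable ε)
    (hXL2 : ∀ i, MemLp (fun ω => X ω i) 2 μ)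
    (hεL2 : ∀ j, MemLp (fun ω => ε ω j) 2 μ)
    (hXmean : ∀ i, ∫ ω, X ω i ∂μ = 0)
    (hεmean : ∀ j, ∫ ω, ε ω j ∂μ = 0)
    (hindep : IndepFun X ε μ)
    (Y : Ω → Fin q → ℝ) (hY : ∀ ω, Y ω = Z.mulVec (X ω) + ε ω)
    (D Dm : Matrix (Fin p) (Fin p) ℝ) (hD : D.PosSemidef)
    (hD1 : Dm * D * Dm = Dm) (hD2 : D * Dm * D = D)
    (hD3 : (Dm * D)ᵀ = Dm * D) (hD4 : (D * Dm)ᵀ = D * Dm)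
    (Cm : Matrix (Fin q) (Fin q) ℝ)
    (hC1 : Cm * covMatrix μ Y Y * Cm = Cm)
    (hC2 : covMatrix μ Y Y * Cm * covMatrix μ Y Y = covMatrix μ Y Y)
    (hC3 : (Cm * covMatrix μ Y Y)ᵀ = Cm * covMatrix μ Y Y)
    (hC4 : (covMatrix μ Y Y * Cm)ᵀ = covMatrix μ Y Y * Cm) :
    ∀ K : Matrix (Fin p) (Fin q) ℝ,
      (∀ K' : Matrix (Fin p) (Fin q) ℝ,
        (∫ ω, (X ω - K.mulVec (Y ω)) ⬝ᵥ Dm.mulVec (X ω - K.mulVec (Y ω)) ∂μ) ≤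
        ∫ ω, (X ω - K'.mulVec (Y ω)) ⬝ᵥ Dm.mulVec (X ω - K'.mulVec (Y ω)) ∂μ)
      ↔ ∃ A B : Matrix (Fin p) (Fin q) ℝ,
          A * covMatrix μ Y Y = 0 ∧ D * B = 0 ∧
          K = covMatrix μ X Y * Cm + A + B :=
  kalman_gain_minimizers_general μ X ε Z hXL2 hεL2 Y hY D Dm hD hD1 hD2 hD3 hD4 Cm hC2
end

section
/- (Minimal Frobenius norm of the Kalman gain.) Let K̂ = Cov(X,Y) Cov(Y)⁻ and suppose K̂ = D D⁻ K̂. Then among all minimizers K = K̂ + A + B of E‖X − K Y‖²_D (with A Cov(Y) = 0 and D B = 0), K̂ has the smallest Frobenius norm: ‖K̂ + A + B‖²_F = ‖K̂‖²_F + ‖A + B‖²_F ≥ ‖K̂‖²_F, with equality iff A + B = 0. -/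
open Matrix MeasureTheory ProbabilityTheory

/-- Squared Frobenius norm of a matrix. -/
noncomputable def frobSq {p q : ℕ} (M : Matrix (Fin p) (Fin q) ℝ) : ℝ :=
  Matrix.trace (Mᵀ * M)

/-! `K̂ = Cov(X,Y) Cov(Y)⁻` is orthogonal, for the Frobenius inner product
`⟨M, N⟩ = tr (Mᵀ N)`, to both kinds of perturbation: `K̂ = K̂ π_C` with `π_C = Cov(Y) Cov(Y)⁻`
a symmetric projector annihilated on the right by `A`, and `K̂ = π_D K̂` with `π_D = D D⁻`,
whose transpose `D⁻ᵀ D` annihilates `B`. Pythagoras then gives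
`‖K̂ + A + B‖²_F = ‖K̂‖²_F + ‖A + B‖²_F`. -/

namespace Matrix

variable {m n R : Type*} [Fintype m] [CommRing R]

theorem trace_transpose_mul_eq_zero_of_mul_eq_self [Fintype n] {K A : Matrix m n R}
    {P : Matrix n n R} (hP : Pᵀ = P) (hK : K * P = K) (hA : A * P = 0) :
    trace (Kᵀ * A) = 0 :=
  calc trace (Kᵀ * A) = trace (P * (Kᵀ * A)) := by
        rw [← hP, ← Matrix.mul_assoc, ← transpose_mul, hK]
    _ = trace (Kᵀ * (A * P)) := by rw [trace_mul_comm, Matrix.mul_assoc]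
    _ = 0 := by rw [hA, Matrix.mul_zero, trace_zero]

theorem transpose_mul_eq_zero_of_mul_mul_eq_self {K B : Matrix m n R} {D M : Matrix m m R}
    (hK : D * M * K = K) (hB : Dᵀ * B = 0) : Kᵀ * B = 0 := by
  rw [← hK, transpose_mul, transpose_mul, Matrix.mul_assoc, Matrix.mul_assoc, hB,
    Matrix.mul_zero, Matrix.mul_zero]

end Matrix

section frobSq

variable {p q : ℕ}

theorem frobSq_eq_sum_sq (M : Matrix (Fin p) (Fin q) ℝ) :
    frobSq M = ∑ j, ∑ i, M i j ^ 2 := by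
  simp [frobSq, trace, mul_apply, sq]

theorem frobSq_nonneg (M : Matrix (Fin p) (Fin q) ℝ) : 0 ≤ frobSq M := by
  rw [frobSq_eq_sum_sq]
  positivity

theorem frobSq_eq_zero_iff {M : Matrix (Fin p) (Fin q) ℝ} : frobSq M = 0 ↔ M = 0 := by
  simp only [frobSq_eq_sum_sq, Finset.sum_eq_zero_iff_of_nonneg (fun _ _ =>
    Finset.sum_nonneg fun _ _ => sq_nonneg _), Finset.sum_eq_zero_iff_of_nonneg
    (fun _ _ => sq_nonneg _), Finset.mem_univ, true_implies, sq_eq_zero_iff]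
  exact ⟨fun h => ext fun i j => h j i, fun h j i => by simp [h]⟩

theorem frobSq_add_of_trace_transpose_mul_eq_zero {K N : Matrix (Fin p) (Fin q) ℝ}
    (h : trace (Kᵀ * N) = 0) : frobSq (K + N) = frobSq K + frobSq N := by
  have h' : trace (Nᵀ * K) = 0 := by
    rw [← trace_transpose, transpose_mul, transpose_transpose, h]
  simp only [frobSq, transpose_add, Matrix.add_mul, Matrix.mul_add, trace_add, h, h']
  ring

end frobSq

theorem kalman_gain_min_frobenius_general {Ω : Type*} [MeasurableSpace Ω]
    (μ : Measure Ω) {p q : ℕ}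
    (X : Ω → Fin p → ℝ)
    (Y : Ω → Fin q → ℝ)
    (D Dm : Matrix (Fin p) (Fin p) ℝ) (hD : D.PosSemidef)
    (Cm : Matrix (Fin q) (Fin q) ℝ)
    (hC1 : Cm * covMatrix μ Y Y * Cm = Cm)
    (hC4 : (covMatrix μ Y Y * Cm)ᵀ = covMatrix μ Y Y * Cm)
    (hKhat : D * Dm * (covMatrix μ X Y * Cm) = covMatrix μ X Y * Cm) :
    ∀ A B : Matrix (Fin p) (Fin q) ℝ, A * covMatrix μ Y Y = 0 → D * B = 0 →
      frobSq (covMatrix μ X Y * Cm + A + B)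
        = frobSq (covMatrix μ X Y * Cm) + frobSq (A + B) ∧
      frobSq (covMatrix μ X Y * Cm) ≤ frobSq (covMatrix μ X Y * Cm + A + B) ∧
      (frobSq (covMatrix μ X Y * Cm + A + B) = frobSq (covMatrix μ X Y * Cm)
        ↔ A + B = 0) := by
  intro A B hA hB
  set K := covMatrix μ X Y * Cm
  have hKA : trace (Kᵀ * A) = 0 :=
    trace_transpose_mul_eq_zero_of_mul_eq_self hC4
      (by rw [Matrix.mul_assoc, ← Matrix.mul_assoc Cm, hC1])
      (by rw [← Matrix.mul_assoc, hA, Matrix.zero_mul])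
  have hKB : Kᵀ * B = 0 :=
    transpose_mul_eq_zero_of_mul_mul_eq_self hKhat (by rwa [show Dᵀ = D from hD.isHermitian])
  have hpythagoras : frobSq (K + (A + B)) = frobSq K + frobSq (A + B) :=
    frobSq_add_of_trace_transpose_mul_eq_zero
      (by rw [Matrix.mul_add, trace_add, hKA, hKB, trace_zero, add_zero])
  rw [add_assoc, hpythagoras, add_eq_left, frobSq_eq_zero_iff]
  exact ⟨rfl, le_add_of_nonneg_right (frobSq_nonneg _), Iff.rfl⟩

/-- If `K̂ = Cov(X,Y) Cov(Y)⁻` satisfies `K̂ = D D⁻ K̂`, then among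
all minimizers `K̂ + A + B` (with `A Cov(Y) = 0`, `D B = 0`), `K̂` has the smallest
Frobenius norm: `‖K̂+A+B‖²_F = ‖K̂‖²_F + ‖A+B‖²_F ≥ ‖K̂‖²_F`, equality iff `A+B = 0`. -/
theorem kalman_gain_min_frobenius {Ω : Type*} [MeasurableSpace Ω]
    (μ : Measure Ω) [IsProbabilityMeasure μ] {p q : ℕ}
    (X : Ω → Fin p → ℝ) (ε : Ω → Fin q → ℝ)
    (Z : Matrix (Fin q) (Fin p) ℝ)
    (hXmeas : Measurable X) (hεmeas : Measurable ε)
    (hXL2 : ∀ i, MemLp (fun ω => X ω i) 2 μ)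
    (hεL2 : ∀ j, MemLp (fun ω => ε ω j) 2 μ)
    (hXmean : ∀ i, ∫ ω, X ω i ∂μ = 0)
    (hεmean : ∀ j, ∫ ω, ε ω j ∂μ = 0)
    (hindep : IndepFun X ε μ)
    (Y : Ω → Fin q → ℝ) (hY : ∀ ω, Y ω = Z.mulVec (X ω) + ε ω)
    (D Dm : Matrix (Fin p) (Fin p) ℝ) (hD : D.PosSemidef)
    (hD1 : Dm * D * Dm = Dm) (hD2 : D * Dm * D = D)
    (hD3 : (Dm * D)ᵀ = Dm * D) (hD4 : (D * Dm)ᵀ = D * Dm)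
    (Cm : Matrix (Fin q) (Fin q) ℝ)
    (hC1 : Cm * covMatrix μ Y Y * Cm = Cm)
    (hC2 : covMatrix μ Y Y * Cm * covMatrix μ Y Y = covMatrix μ Y Y)
    (hC3 : (Cm * covMatrix μ Y Y)ᵀ = Cm * covMatrix μ Y Y)
    (hC4 : (covMatrix μ Y Y * Cm)ᵀ = covMatrix μ Y Y * Cm)
    (hKhat : D * Dm * (covMatrix μ X Y * Cm) = covMatrix μ X Y * Cm) :
    ∀ A B : Matrix (Fin p) (Fin q) ℝ, A * covMatrix μ Y Y = 0 → D * B = 0 →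
      frobSq (covMatrix μ X Y * Cm + A + B)
        = frobSq (covMatrix μ X Y * Cm) + frobSq (A + B) ∧
      frobSq (covMatrix μ X Y * Cm) ≤ frobSq (covMatrix μ X Y * Cm + A + B) ∧
      (frobSq (covMatrix μ X Y * Cm + A + B) = frobSq (covMatrix μ X Y * Cm)
        ↔ A + B = 0) :=
  kalman_gain_min_frobenius_general μ X Y D Dm hD Cm hC1 hC4 hKhat
end

section
/- (Lemma 2(b), 'nothing lost' identity.) Let Σ ∈ ℝ^{p×p} be symmetric positive semidefinite, Z ∈ ℝ^{q×p}, V ∈ ℝ^{q×q} symmetric positive semidefinite, C = Z Σ Zᵀ + V, K = Σ Zᵀ C⁻, and Z^Σ = Σ Zᵀ (Z Σ Zᵀ)⁻. Then Z^Σ Z K = K. -/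
/-!
Write `Σ = R R` with `R` symmetric and put `W = Z R`, so that `Z Σ Zᵀ = W Wᵀ` and `Σ Zᵀ = R Wᵀ`.
Since `W Wᵀ X = 0` forces `Wᵀ X = 0`, the identity `W Wᵀ B W Wᵀ = W Wᵀ` yields `Wᵀ B W Wᵀ = Wᵀ`,
that is `Σ Zᵀ B Z Σ Zᵀ = Σ Zᵀ`; multiplying on the right by `C⁻` gives the claim.
-/

open Matrix

namespace Matrix

theorem conjTranspose_mul_mul_self_mul_conjTranspose_of_innerInverse {R m n : Type*} [Fintype m]
    [Fintype n] [PartialOrder R] [Ring R] [StarRing R] [StarOrderedRing R] [NoZeroDivisors R]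
    (W : Matrix m n R) (B : Matrix m m R) (h : W * Wᴴ * B * (W * Wᴴ) = W * Wᴴ) :
    Wᴴ * B * (W * Wᴴ) = Wᴴ := by
  classical
  have : W * Wᴴ * (B * (W * Wᴴ) - 1) = 0 := by
    rw [Matrix.mul_sub, Matrix.mul_one, ← Matrix.mul_assoc, h, sub_self]
  rwa [self_mul_conjTranspose_mul_eq_zero, Matrix.mul_sub, Matrix.mul_one, sub_eq_zero,
    ← Matrix.mul_assoc] at this

open scoped ComplexOrder MatrixOrder in
theorem PosSemidef.mul_conjTranspose_mul_mul_self_of_innerInverse {𝕜 m n : Type*} [Fintype m]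
    [Fintype n] [RCLike 𝕜] {S : Matrix n n 𝕜} (hS : S.PosSemidef) (Z : Matrix m n 𝕜)
    (B : Matrix m m 𝕜) (h : Z * S * Zᴴ * B * (Z * S * Zᴴ) = Z * S * Zᴴ) :
    S * Zᴴ * B * (Z * S * Zᴴ) = S * Zᴴ := by
  classical
  obtain ⟨R, hR, rfl⟩ : ∃ R : Matrix n n 𝕜, Rᴴ = R ∧ S = R * R :=
    ⟨CFC.sqrt S, (CFC.sqrt_nonneg S).posSemidef.isHermitian,
      (CFC.sqrt_mul_sqrt_self S hS.nonneg).symm⟩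
  have hW : (Z * R)ᴴ = R * Zᴴ := by rw [conjTranspose_mul, hR]
  have hgram : Z * (R * R) * Zᴴ = Z * R * (Z * R)ᴴ := by simp only [hW, Matrix.mul_assoc]
  have hSZ : R * R * Zᴴ = R * (Z * R)ᴴ := by rw [hW, Matrix.mul_assoc]
  rw [hgram] at h ⊢
  rw [hSZ, Matrix.mul_assoc R, Matrix.mul_assoc R,
    conjTranspose_mul_mul_self_mul_conjTranspose_of_innerInverse _ _ h]

end Matrix

theorem nothing_lost_general {p q : ℕ}
    (S : Matrix (Fin p) (Fin p) ℝ) (hS : S.PosSemidef)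
    (Z : Matrix (Fin q) (Fin p) ℝ)
    (Bm : Matrix (Fin q) (Fin q) ℝ)
    (hB2 : (Z * S * Zᵀ) * Bm * (Z * S * Zᵀ) = Z * S * Zᵀ)
    (Cm : Matrix (Fin q) (Fin q) ℝ) :
    (S * Zᵀ * Bm) * Z * (S * Zᵀ * Cm) = S * Zᵀ * Cm := by
  rw [← conjTranspose_eq_transpose_of_trivial] at hB2 ⊢
  calc S * Zᴴ * Bm * Z * (S * Zᴴ * Cm) = S * Zᴴ * Bm * (Z * S * Zᴴ) * Cm := by
        simp only [Matrix.mul_assoc]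
    _ = S * Zᴴ * Cm := by rw [hS.mul_conjTranspose_mul_mul_self_of_innerInverse Z Bm hB2]

/-- Lemma 2(b), 'nothing lost': With `Σ ⪰ 0`, `V ⪰ 0` symmetric,
`C = Z Σ Zᵀ + V`, `K = Σ Zᵀ C⁻`, `Z^Σ = Σ Zᵀ (Z Σ Zᵀ)⁻` (Moore–Penrose
pseudoinverses), one has `Z^Σ Z K = K`. -/
theorem nothing_lost {p q : ℕ}
    (S : Matrix (Fin p) (Fin p) ℝ) (hS : S.PosSemidef)
    (Z : Matrix (Fin q) (Fin p) ℝ)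
    (V : Matrix (Fin q) (Fin q) ℝ) (hV : V.PosSemidef)
    (Bm : Matrix (Fin q) (Fin q) ℝ)
    (hB1 : Bm * (Z * S * Zᵀ) * Bm = Bm)
    (hB2 : (Z * S * Zᵀ) * Bm * (Z * S * Zᵀ) = Z * S * Zᵀ)
    (hB3 : (Bm * (Z * S * Zᵀ))ᵀ = Bm * (Z * S * Zᵀ))
    (hB4 : ((Z * S * Zᵀ) * Bm)ᵀ = (Z * S * Zᵀ) * Bm)
    (Cm : Matrix (Fin q) (Fin q) ℝ)
    (hC1 : Cm * (Z * S * Zᵀ + V) * Cm = Cm)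
    (hC2 : (Z * S * Zᵀ + V) * Cm * (Z * S * Zᵀ + V) = Z * S * Zᵀ + V)
    (hC3 : (Cm * (Z * S * Zᵀ + V))ᵀ = Cm * (Z * S * Zᵀ + V))
    (hC4 : ((Z * S * Zᵀ + V) * Cm)ᵀ = (Z * S * Zᵀ + V) * Cm) :
    (S * Zᵀ * Bm) * Z * (S * Zᵀ * Cm) = S * Zᵀ * Cm :=
  nothing_lost_general S hS Z Bm hB2 Cm
end

section
/- (Corollary: recovery of the state projection from the error projection.) With Y = Z X + ε as above, K = Σ Zᵀ C⁻, C = Z Σ Zᵀ + V, and Z^Σ = Σ Zᵀ (Z Σ Zᵀ)⁻, the best linear reconstruction of X from Y satisfies K Y = Z^Σ (Y − (I_q − Z K) Y). Equivalently, oP(X|Y) = Z^Σ (Y − oP(ε|Y)), regardless of the ranks of Z or Z Σ Zᵀ. -/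
open Matrix
open scoped ComplexOrder

/-!
Writing `Σ = Bᴴ B` and `M = B Zᴴ`, the matrix `Z Σ Zᴴ` is the Gram matrix `Mᴴ M`, and any
generalized inverse `G` of a Gram matrix satisfies `M G Mᴴ M = M`, because `Mᴴ M X = 0` forces
`M X = 0`. Multiplying by `Bᴴ` on the left gives `Σ Zᴴ G (Z Σ Zᴴ) = Σ Zᴴ`, and multiplying this on
the right by any matrix, in particular `C⁻`, turns `Z^Σ Z K` into `K`; this is the claimed
identity since `y − (I − Z K) y = Z K y`.
-/

namespace Matrix

variable {𝕜 : Type*} [RCLike 𝕜] {m n : Type*} [Fintype m] [Fintype n]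

lemma mul_mul_conjTranspose_mul_self_eq_self (M : Matrix m n 𝕜) {G : Matrix n n 𝕜}
    (hG : Mᴴ * M * G * (Mᴴ * M) = Mᴴ * M) : M * G * (Mᴴ * M) = M := by
  classical
  have h : Mᴴ * M * (G * (Mᴴ * M) - 1) = 0 := by
    rw [Matrix.mul_sub, Matrix.mul_one, ← Matrix.mul_assoc, hG, sub_self]
  rwa [conjTranspose_mul_self_mul_eq_zero, Matrix.mul_sub, Matrix.mul_one, sub_eq_zero,
    ← Matrix.mul_assoc] at h

open scoped MatrixOrder in
lemma PosSemidef.mul_conjTranspose_mul_mul_eq_mul_conjTranspose {S : Matrix n n 𝕜}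
    (hS : S.PosSemidef) (Z : Matrix m n 𝕜) {G : Matrix m m 𝕜}
    (hG : Z * S * Zᴴ * G * (Z * S * Zᴴ) = Z * S * Zᴴ) :
    S * Zᴴ * G * (Z * S * Zᴴ) = S * Zᴴ := by
  classical
  obtain ⟨B, rfl⟩ := CStarAlgebra.nonneg_iff_eq_star_mul_self.mp hS.nonneg
  set M := B * Zᴴ
  have hgram : Z * (star B * B) * Zᴴ = Mᴴ * M := by
    simp only [M, conjTranspose_mul, conjTranspose_conjTranspose, star_eq_conjTranspose,
      Matrix.mul_assoc]
  have hfactor : star B * B * Zᴴ = Bᴴ * M := by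
    simp only [M, star_eq_conjTranspose, Matrix.mul_assoc]
  rw [hgram] at hG ⊢
  rw [hfactor, Matrix.mul_assoc Bᴴ, Matrix.mul_assoc Bᴴ,
    mul_mul_conjTranspose_mul_self_eq_self M hG]

end Matrix

theorem recover_state_from_error_projection_general {p q : ℕ}
    (S : Matrix (Fin p) (Fin p) ℝ) (hS : S.PosSemidef)
    (Z : Matrix (Fin q) (Fin p) ℝ)
    (Bm : Matrix (Fin q) (Fin q) ℝ)
    (hB2 : (Z * S * Zᵀ) * Bm * (Z * S * Zᵀ) = Z * S * Zᵀ)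
    (Cm : Matrix (Fin q) (Fin q) ℝ) :
    ∀ y : Fin q → ℝ,
      (S * Zᵀ * Cm).mulVec y
        = (S * Zᵀ * Bm).mulVec (y - ((1 : Matrix (Fin q) (Fin q) ℝ)
            - Z * (S * Zᵀ * Cm)).mulVec y) := by
  intro y
  have hK : S * Zᵀ * Bm * (Z * S * Zᵀ) = S * Zᵀ := by
    simp only [← conjTranspose_eq_transpose_of_trivial] at hB2 ⊢
    exact hS.mul_conjTranspose_mul_mul_eq_mul_conjTranspose Z hB2
  rw [sub_mulVec, one_mulVec, sub_sub_cancel, mulVec_mulVec]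
  congr 1
  calc S * Zᵀ * Cm = S * Zᵀ * Bm * (Z * S * Zᵀ) * Cm := by rw [hK]
    _ = S * Zᵀ * Bm * (Z * (S * Zᵀ * Cm)) := by simp only [Matrix.mul_assoc]

/-- Corollary: With `C = Z Σ Zᵀ + V`, `K = Σ Zᵀ C⁻`, and
`Z^Σ = Σ Zᵀ (Z Σ Zᵀ)⁻` (Moore–Penrose pseudoinverses), the best linear
reconstruction of the state satisfies `K y = Z^Σ (y − (I − Z K) y)` for every
`y`, i.e. `oP(X|Y) = Z^Σ (Y − oP(ε|Y))`, regardless of the ranks of `Z` or `ZΣZᵀ`. -/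
theorem recover_state_from_error_projection {p q : ℕ}
    (S : Matrix (Fin p) (Fin p) ℝ) (hS : S.PosSemidef)
    (Z : Matrix (Fin q) (Fin p) ℝ)
    (V : Matrix (Fin q) (Fin q) ℝ) (hV : V.PosSemidef)
    (Bm : Matrix (Fin q) (Fin q) ℝ)
    (hB1 : Bm * (Z * S * Zᵀ) * Bm = Bm)
    (hB2 : (Z * S * Zᵀ) * Bm * (Z * S * Zᵀ) = Z * S * Zᵀ)
    (hB3 : (Bm * (Z * S * Zᵀ))ᵀ = Bm * (Z * S * Zᵀ))
    (hB4 : ((Z * S * Zᵀ) * Bm)ᵀ = (Z * S * Zᵀ) * Bm)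
    (Cm : Matrix (Fin q) (Fin q) ℝ)
    (hC1 : Cm * (Z * S * Zᵀ + V) * Cm = Cm)
    (hC2 : (Z * S * Zᵀ + V) * Cm * (Z * S * Zᵀ + V) = Z * S * Zᵀ + V)
    (hC3 : (Cm * (Z * S * Zᵀ + V))ᵀ = Cm * (Z * S * Zᵀ + V))
    (hC4 : ((Z * S * Zᵀ + V) * Cm)ᵀ = (Z * S * Zᵀ + V) * Cm) :
    ∀ y : Fin q → ℝ,
      (S * Zᵀ * Cm).mulVec y
        = (S * Zᵀ * Bm).mulVec (y - ((1 : Matrix (Fin q) (Fin q) ℝ)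
            - Z * (S * Zᵀ * Cm)).mulVec y) :=
  recover_state_from_error_projection_general S hS Z Bm hB2 Cm
end

section
/- The matrix identity (Z^Σ)ᵀ (Z^Σ Z)ᵀ Σ⁻ (Z^Σ Z) Z^Σ = B⁻ holds, where Σ ⪰ 0 symmetric p×p, Z ∈ ℝ^{q×p}, B = ZΣZᵀ, Z^Σ = ΣZᵀB⁻, and ⁻ is the Moore–Penrose pseudoinverse. -/
open Matrix

/-!
The Moore–Penrose inverse of the symmetric matrix `B = Z Σ Zᵀ` is symmetric (its transpose
satisfies the same four equations, and these determine it), so `(Z^Σ)ᵀ = B⁻ Z Σ`,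
and the left side collapses to `B⁻ B B⁻ (Z Σ Σ⁻ Σ Zᵀ) B⁻ B B⁻ = B⁻ B B⁻ = B⁻`.
-/

namespace Matrix

variable {m n R : Type*} [Fintype n] [CommSemiring R]

theorem IsSymm.mul_mul_transpose {S : Matrix n n R} (hS : S.IsSymm) (Z : Matrix m n R) :
    (Z * S * Zᵀ).IsSymm := by
  simp only [IsSymm, transpose_mul, transpose_transpose, hS.eq, Matrix.mul_assoc]

variable [Fintype m]

structure IsMoorePenroseInverse (A : Matrix m n R) (X : Matrix n m R) : Prop where
  mul_mul_self : X * A * X = X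
  mul_mul_left : A * X * A = A
  transpose_mul_left : (X * A)ᵀ = X * A
  transpose_mul_right : (A * X)ᵀ = A * X

namespace IsMoorePenroseInverse

variable {A : Matrix m n R} {X Y : Matrix n m R}

theorem transpose (h : IsMoorePenroseInverse A X) : IsMoorePenroseInverse Aᵀ Xᵀ where
  mul_mul_self := by
    simpa only [transpose_mul, Matrix.mul_assoc] using congrArg Matrix.transpose h.mul_mul_self
  mul_mul_left := by
    simpa only [transpose_mul, Matrix.mul_assoc] using congrArg Matrix.transpose h.mul_mul_left
  transpose_mul_left := by rw [← transpose_mul, transpose_transpose, h.transpose_mul_right]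
  transpose_mul_right := by rw [← transpose_mul, transpose_transpose, h.transpose_mul_left]

/-- Both `X` and `Y` equal `X A Y`. -/
theorem unique (hX : IsMoorePenroseInverse A X) (hY : IsMoorePenroseInverse A Y) : X = Y := by
  have hXY : X = X * A * Y := calc
    X = X * (A * X)ᵀ := by rw [hX.transpose_mul_right, ← Matrix.mul_assoc, hX.mul_mul_self]
    _ = X * (A * Y * A * X)ᵀ := by rw [hY.mul_mul_left]
    _ = X * ((A * X)ᵀ * (A * Y)ᵀ) := by simp only [transpose_mul, Matrix.mul_assoc]
    _ = X * A * Y := by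
      simp only [hX.transpose_mul_right, hY.transpose_mul_right, ← Matrix.mul_assoc,
        hX.mul_mul_self]
  have hYX : Y = X * A * Y := calc
    Y = (Y * A)ᵀ * Y := by rw [hY.transpose_mul_left, hY.mul_mul_self]
    _ = (Y * (A * X * A))ᵀ * Y := by rw [hX.mul_mul_left]
    _ = (X * A)ᵀ * (Y * A)ᵀ * Y := by simp only [transpose_mul, Matrix.mul_assoc]
    _ = X * A * Y := by
      rw [hX.transpose_mul_left, hY.transpose_mul_left, Matrix.mul_assoc (X * A),
        hY.mul_mul_self]
  rw [hXY, ← hYX]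

theorem isSymm {B : Matrix n n R} {X : Matrix n n R} (hB : B.IsSymm)
    (h : IsMoorePenroseInverse B X) : X.IsSymm :=
  (hB.eq ▸ h.transpose).unique h

end IsMoorePenroseInverse

end Matrix

theorem ZSigma_pullback_identity_general {p q : ℕ}
    (S : Matrix (Fin p) (Fin p) ℝ) (hS : S.PosSemidef)
    (Sm : Matrix (Fin p) (Fin p) ℝ)
    (hS2 : S * Sm * S = S)
    (Z : Matrix (Fin q) (Fin p) ℝ)
    (Bm : Matrix (Fin q) (Fin q) ℝ)
    (hB1 : Bm * (Z * S * Zᵀ) * Bm = Bm)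
    (hB2 : (Z * S * Zᵀ) * Bm * (Z * S * Zᵀ) = Z * S * Zᵀ)
    (hB3 : (Bm * (Z * S * Zᵀ))ᵀ = Bm * (Z * S * Zᵀ))
    (hB4 : ((Z * S * Zᵀ) * Bm)ᵀ = (Z * S * Zᵀ) * Bm) :
    (S * Zᵀ * Bm)ᵀ * ((S * Zᵀ * Bm) * Z)ᵀ * Sm * ((S * Zᵀ * Bm) * Z) *
      (S * Zᵀ * Bm) = Bm := by
  have hSsymm : S.IsSymm := isHermitian_iff_isSymm.mp hS.isHermitian
  have hBmsymm : Bm.IsSymm :=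
    IsMoorePenroseInverse.isSymm (hSsymm.mul_mul_transpose Z) ⟨hB1, hB2, hB3, hB4⟩
  calc _ = Bm * (Z * S * Zᵀ) * Bm * Z * (S * Sm * S) * Zᵀ * (Bm * (Z * S * Zᵀ) * Bm) := by
        simp only [transpose_mul, transpose_transpose, hSsymm.eq, hBmsymm.eq, Matrix.mul_assoc]
    _ = Bm := by
        rw [hS2, hB1]
        simpa only [Matrix.mul_assoc] using hB1

/-- With `Σ ⪰ 0` symmetric with Moore–Penrose pseudoinverse `Σ⁻`,
`B = Z Σ Zᵀ` with Moore–Penrose pseudoinverse `B⁻`, and `Z^Σ = Σ Zᵀ B⁻`, one has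
`(Z^Σ)ᵀ (Z^Σ Z)ᵀ Σ⁻ (Z^Σ Z) Z^Σ = B⁻`. -/
theorem ZSigma_pullback_identity {p q : ℕ}
    (S : Matrix (Fin p) (Fin p) ℝ) (hS : S.PosSemidef)
    (Sm : Matrix (Fin p) (Fin p) ℝ)
    (hS1 : Sm * S * Sm = Sm) (hS2 : S * Sm * S = S)
    (hS3 : (Sm * S)ᵀ = Sm * S) (hS4 : (S * Sm)ᵀ = S * Sm)
    (Z : Matrix (Fin q) (Fin p) ℝ)
    (Bm : Matrix (Fin q) (Fin q) ℝ)
    (hB1 : Bm * (Z * S * Zᵀ) * Bm = Bm)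
    (hB2 : (Z * S * Zᵀ) * Bm * (Z * S * Zᵀ) = Z * S * Zᵀ)
    (hB3 : (Bm * (Z * S * Zᵀ))ᵀ = Bm * (Z * S * Zᵀ))
    (hB4 : ((Z * S * Zᵀ) * Bm)ᵀ = (Z * S * Zᵀ) * Bm) :
    (S * Zᵀ * Bm)ᵀ * ((S * Zᵀ * Bm) * Z)ᵀ * Sm * ((S * Zᵀ * Bm) * Z) *
      (S * Zᵀ * Bm) = Bm :=
  ZSigma_pullback_identity_general S hS Sm hS2 Z Bm hB1 hB2 hB3 hB4
end
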